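/- Let (p_n) be a sequence with n·p_n → ∞. Then with high probability G ~ 𝔾(n, p_n) has the property that every vertex subset S with |S| ≤ (n·p_n)^{−21}·n spans at most 1.1·|S| edges. -/

import Mathlib

open MeasureTheory Filter

/-- Bernoulli measure on `Bool` with parameter `p`. -/
noncomputable def bernoulliM (p : ℝ) : Measure Bool :=
  (Real.toNNReal p) • Measure.dirac true + (Real.toNNReal (1 - p)) • Measure.dirac false

instance (p : ℝ) : IsFiniteMeasure (bernoulliM p) := by
  unfold bernoulliM; infer_instance

/-- The Erdős–Rényi measure `𝔾(n,p)`: a random symmetric adjacency structure is encoded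
by a matrix of independent Bernoulli(p) entries, of which only the entries strictly
above the diagonal are used (via `GrAdj`). -/
noncomputable def erMeasure (n : ℕ) (p : ℝ) : Measure (Fin n → Fin n → Bool) :=
  Measure.pi fun _ => Measure.pi fun _ => bernoulliM p

/-- Adjacency in the graph encoded by the matrix `A`: distinct vertices `u, v` are
adjacent iff the entry of `A` at the ordered pair `(min u v, max u v)` is `true`. -/
def GrAdj {n : ℕ} (A : Fin n → Fin n → Bool) (u v : Fin n) : Prop :=
  u ≠ v ∧ A (min u v) (max u v) = true

/-- The number of edges spanned by the vertex set `S` (each edge counted once, as an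
ordered pair `(u,v)` with `u < v`). -/
noncomputable def edgesWithin {n : ℕ} (A : Fin n → Fin n → Bool) (S : Set (Fin n)) : ℕ :=
  ({e : Fin n × Fin n | e.1 < e.2 ∧ e.1 ∈ S ∧ e.2 ∈ S ∧ GrAdj A e.1 e.2}).ncard

open Topology
open scoped ENNReal

/-!
First moment method. If some `s`-set spans more than `1.1 s` edges, it contains
`m = ⌊1.1 s⌋ + 1` specified present pairs, so by a union bound the bad event for size `s` has
probability at most `C(n, s) C(s², m) pᵐ ≤ (3n/s)ˢ (3sp)ᵐ`. Raising to the tenth power and using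
`10 m ≥ 11 s`, `3sp ≤ 1` and `s (np)²¹ ≤ n`, this is at most `(27/(np))ˢ`, so the sum over
`1 ≤ s ≤ (np)⁻²¹ n` is `O(1/(np)) → 0`.
-/

lemma tendsto_measure_of_tendsto_measure_compl {ι : Type*} {l : Filter ι} {Ω : ι → Type*}
    [∀ i, MeasurableSpace (Ω i)] {μ : ∀ i, Measure (Ω i)} [∀ i, IsProbabilityMeasure (μ i)]
    {s : ∀ i, Set (Ω i)} (h : Tendsto (fun i => μ i (s i)ᶜ) l (𝓝 0)) :
    Tendsto (fun i => μ i (s i)) l (𝓝 1) := by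
  have hsub : Tendsto (fun i => 1 - μ i (s i)ᶜ) l (𝓝 1) := by
    simpa using ENNReal.Tendsto.sub tendsto_const_nhds h (Or.inl ENNReal.one_ne_top)
  refine tendsto_of_tendsto_of_tendsto_of_le_of_le hsub tendsto_const_nhds (fun i => ?_)
    (fun i => prob_le_one)
  rw [tsub_le_iff_right, ← measure_univ (μ := μ i), ← Set.union_compl_self (s i)]
  exact measure_union_le _ _

lemma bernoulliM_singleton_true (p : ℝ) : bernoulliM p {true} = ENNReal.ofReal p := by
  simp [bernoulliM, ENNReal.ofReal, ENNReal.smul_def, -Measure.coe_nnreal_smul]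

lemma isProbabilityMeasure_bernoulliM {p : ℝ} (h0 : 0 ≤ p) (h1 : p ≤ 1) :
    IsProbabilityMeasure (bernoulliM p) := by
  constructor
  simp only [bernoulliM, Measure.add_apply, Measure.smul_apply, measure_univ, ENNReal.smul_def,
    smul_eq_mul, mul_one]
  rw [← ENNReal.coe_add, ← Real.toNNReal_add h0 (by linarith)]
  norm_num

lemma isProbabilityMeasure_erMeasure {n : ℕ} {p : ℝ} (h0 : 0 ≤ p) (h1 : p ≤ 1) :
    IsProbabilityMeasure (erMeasure n p) :=
  have := isProbabilityMeasure_bernoulliM h0 h1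
  inferInstanceAs (IsProbabilityMeasure (Measure.pi _))

lemma erMeasure_forall_true {n : ℕ} {p : ℝ} (h0 : 0 ≤ p) (h1 : p ≤ 1)
    (T : Finset (Fin n × Fin n)) :
    erMeasure n p {A | ∀ e ∈ T, A e.1 e.2 = true} = ENNReal.ofReal p ^ T.card := by
  have := isProbabilityMeasure_bernoulliM h0 h1
  have hT : {A : Fin n → Fin n → Bool | ∀ e ∈ T, A e.1 e.2 = true} =
      Set.univ.pi fun i => Set.univ.pi fun j => if (i, j) ∈ T then {true} else Set.univ := by
    ext A
    simp only [Set.mem_univ_pi, Prod.forall]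
    refine forall₂_congr fun i j => ?_
    split_ifs with h <;> simp [h]
  rw [hT, erMeasure, Measure.pi_pi]
  simp_rw [Measure.pi_pi, apply_ite (bernoulliM p), bernoulliM_singleton_true, measure_univ,
    ← Fintype.prod_prod_type' fun i j => if (i, j) ∈ T then ENNReal.ofReal p else 1,
    Fintype.prod_ite_mem, Finset.prod_const]

lemma edgesWithin_le_card_filter {n : ℕ} (A : Fin n → Fin n → Bool) (S : Finset (Fin n)) :
    edgesWithin A S ≤ ((S ×ˢ S).filter fun e => A e.1 e.2 = true).card := by
  rw [edgesWithin, ← Set.ncard_coe_finset]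
  refine Set.ncard_le_ncard ?_ (Finset.finite_toSet _)
  rintro ⟨u, v⟩ ⟨huv, hu, hv, -, hA⟩
  rw [min_eq_left huv.le, max_eq_right huv.le] at hA
  simp_all

lemma exists_subset_product_forall_true {n k : ℕ} {A : Fin n → Fin n → Bool}
    {S : Finset (Fin n)} (hk : k ≤ edgesWithin A S) :
    ∃ T ⊆ S ×ˢ S, T.card = k ∧ ∀ e ∈ T, A e.1 e.2 = true := by
  obtain ⟨T, hT, rfl⟩ := Finset.exists_subset_card_eq (hk.trans (edgesWithin_le_card_filter A S))
  exact ⟨T, hT.trans (Finset.filter_subset _ _), rfl, fun e he => (Finset.mem_filter.1 (hT he)).2⟩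

lemma erMeasure_exists_card_eq_le_edgesWithin_le {n : ℕ} {p : ℝ} (h0 : 0 ≤ p) (h1 : p ≤ 1)
    (s k : ℕ) :
    erMeasure n p {A | ∃ S : Finset (Fin n), S.card = s ∧ k ≤ edgesWithin A S}
      ≤ ENNReal.ofReal (n.choose s * (s * s).choose k * p ^ k) := by
  calc erMeasure n p {A | ∃ S : Finset (Fin n), S.card = s ∧ k ≤ edgesWithin A S}
      ≤ erMeasure n p (⋃ S ∈ Finset.powersetCard s Finset.univ,
          ⋃ T ∈ Finset.powersetCard k (S ×ˢ S), {A | ∀ e ∈ T, A e.1 e.2 = true}) := by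
        refine measure_mono fun A ⟨S, hS, hk⟩ => ?_
        obtain ⟨T, hTS, hT, hA⟩ := exists_subset_product_forall_true hk
        simp only [Set.mem_iUnion, Finset.mem_powersetCard, exists_prop]
        exact ⟨S, ⟨Finset.subset_univ S, hS⟩, T, ⟨hTS, hT⟩, hA⟩
    _ ≤ ∑ S ∈ Finset.powersetCard s Finset.univ, ∑ T ∈ Finset.powersetCard k (S ×ˢ S),
          erMeasure n p {A | ∀ e ∈ T, A e.1 e.2 = true} :=
        (measure_biUnion_finset_le _ _).trans
          (Finset.sum_le_sum fun S _ => measure_biUnion_finset_le _ _)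
    _ = ∑ S ∈ Finset.powersetCard s Finset.univ,
          ((s * s).choose k : ℝ≥0∞) * ENNReal.ofReal p ^ k := by
        refine Finset.sum_congr rfl fun S hS => ?_
        rw [Finset.sum_congr rfl fun T hT => by
            rw [erMeasure_forall_true h0 h1, (Finset.mem_powersetCard.1 hT).2],
          Finset.sum_const, Finset.card_powersetCard, Finset.card_product,
          (Finset.mem_powersetCard.1 hS).2, nsmul_eq_mul]
    _ = ENNReal.ofReal (n.choose s * (s * s).choose k * p ^ k) := by
        rw [Finset.sum_const, Finset.card_powersetCard, Finset.card_univ, Fintype.card_fin,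
          nsmul_eq_mul, ENNReal.ofReal_mul (by positivity), ENNReal.ofReal_mul (by positivity),
          ENNReal.ofReal_pow h0, ENNReal.ofReal_natCast, ENNReal.ofReal_natCast, mul_assoc]

lemma pow_self_le_three_pow_mul_factorial (k : ℕ) : (k : ℝ) ^ k ≤ 3 ^ k * k.factorial := by
  have hexp : Real.exp k ≤ 3 ^ k := by
    rw [← Real.exp_one_pow]
    exact pow_le_pow_left₀ (Real.exp_pos 1).le (Real.exp_one_lt_d9.le.trans (by norm_num)) k
  calc (k : ℝ) ^ k = k ^ k / k.factorial * k.factorial := by field_simp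
    _ ≤ 3 ^ k * k.factorial := by
      gcongr
      exact (Real.pow_div_factorial_le_exp _ k.cast_nonneg k).trans hexp

lemma choose_le_three_mul_div_pow (N k : ℕ) : (N.choose k : ℝ) ≤ (3 * N / k) ^ k := by
  rcases k.eq_zero_or_pos with rfl | hk
  · simp
  have hk' : (0 : ℝ) < (k : ℝ) ^ k := by positivity
  calc (N.choose k : ℝ) ≤ N ^ k / k.factorial := Nat.choose_le_pow_div k N
    _ ≤ N ^ k * 3 ^ k / k ^ k := by
      rw [div_le_div_iff₀ (by positivity) hk', mul_assoc]
      gcongr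
      exact pow_self_le_three_pow_mul_factorial k
    _ = (3 * N / k) ^ k := by rw [div_pow, mul_pow]; ring

lemma choose_mul_self_le_three_mul_pow {s k : ℕ} (hsk : s ≤ k) :
    ((s * s).choose k : ℝ) ≤ (3 * s) ^ k := by
  refine (choose_le_three_mul_div_pow _ k).trans (pow_le_pow_left₀ (by positivity) ?_ k)
  rcases k.eq_zero_or_pos with rfl | hk
  · simp
  rw [div_le_iff₀ (by exact_mod_cast hk)]
  push_cast
  have : (s : ℝ) ≤ k := by exact_mod_cast hsk
  nlinarith [s.cast_nonneg (α := ℝ)]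

lemma le_pow_of_le_pow_mul_pow {y a b c : ℝ} {s m : ℕ} (hy : 0 ≤ y) (hb₀ : 0 ≤ b)
    (hb₁ : b ≤ 1) (hc : 0 ≤ c) (hm : 11 * s ≤ 10 * m) (hyab : y ≤ a ^ s * b ^ m)
    (habc : a ^ 10 * b ^ 11 ≤ c ^ 10) : y ≤ c ^ s := by
  refine le_of_pow_le_pow_left₀ (by norm_num : 10 ≠ 0) (by positivity) ?_
  calc y ^ 10 ≤ (a ^ s * b ^ m) ^ 10 := by gcongr
    _ = (a ^ 10) ^ s * b ^ (10 * m) := by ring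
    _ ≤ (a ^ 10) ^ s * b ^ (11 * s) :=
      mul_le_mul_of_nonneg_left (pow_le_pow_of_le_one hb₀ hb₁ hm) (by positivity)
    _ = (a ^ 10 * b ^ 11) ^ s := by ring
    _ ≤ (c ^ 10) ^ s := by gcongr
    _ = (c ^ s) ^ 10 := by ring

lemma choose_mul_choose_mul_pow_le {n s m : ℕ} {p : ℝ} (hp : 0 ≤ p) (hx : 3 ≤ n * p)
    (hs : s * (n * p) ^ 21 ≤ n) (hm : 11 * s ≤ 10 * m) :
    (n.choose s : ℝ) * (s * s).choose m * p ^ m ≤ (27 / (n * p)) ^ s := by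
  set x := (n : ℝ) * p with hxdef
  have hx0 : 0 < x := by linarith
  have hsp : s * p * x ^ 20 ≤ 1 := by
    refine le_of_mul_le_mul_right ?_ hx0
    calc s * p * x ^ 20 * x = s * x ^ 21 * p := by ring
      _ ≤ n * p := by gcongr
      _ = 1 * x := by ring
  have h3sp : 3 * s * p ≤ 1 := by
    have : 3 ≤ x ^ 20 := hx.trans (le_self_pow₀ (by linarith) (by norm_num))
    nlinarith [mul_nonneg (s.cast_nonneg (α := ℝ)) hp]
  refine le_pow_of_le_pow_mul_pow (a := 3 * n / s) (by positivity) (by positivity) h3sp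
    (by positivity) hm ?_ ?_
  · rw [mul_assoc, mul_pow]
    gcongr
    · exact choose_le_three_mul_div_pow n s
    · exact choose_mul_self_le_three_mul_pow (by omega)
  · rcases s.eq_zero_or_pos with rfl | hs0
    · simp only [Nat.cast_zero, mul_zero, zero_mul, ne_eq, OfNat.ofNat_ne_zero,
        not_false_eq_true, zero_pow]
      positivity
    calc (3 * n / s) ^ 10 * (3 * s * p) ^ 11 = 3 ^ 21 * (s * p * x ^ 20) / x ^ 10 := by
          rw [hxdef]; field_simp
      _ ≤ 3 ^ 30 * 1 / x ^ 10 := by gcongr <;> norm_num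
      _ = (27 / x) ^ 10 := by ring

def smallSetsSparse (n : ℕ) (p : ℝ) : Set (Fin n → Fin n → Bool) :=
  {A | ∀ S : Set (Fin n), (S.ncard : ℝ) ≤ ((n : ℝ) * p) ^ (-21 : ℤ) * n →
    (edgesWithin A S : ℝ) ≤ 1.1 * S.ncard}

noncomputable def sparseSizes (n : ℕ) (p : ℝ) : Finset ℕ :=
  (Finset.range (n + 1)).filter fun s => s * ((n : ℝ) * p) ^ 21 ≤ n

lemma sum_choose_mul_choose_mul_pow_le {n : ℕ} {p : ℝ} (hp : 0 ≤ p) (hx : 54 ≤ n * p) :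
    ∑ s ∈ sparseSizes n p,
      (n.choose s : ℝ) * (s * s).choose (11 * s / 10 + 1) * p ^ (11 * s / 10 + 1)
      ≤ 108 / (n * p) := by
  have hc : 2 * (27 / (n * p)) ≤ 1 := by
    rw [mul_div_assoc', div_le_one (by linarith)]; linarith
  have hterm : ∀ s ∈ sparseSizes n p,
      (n.choose s : ℝ) * (s * s).choose (11 * s / 10 + 1) * p ^ (11 * s / 10 + 1)
        ≤ 2 * (27 / (n * p)) * (1 / 2) ^ s := by
    intro s hs
    rcases s.eq_zero_or_pos with rfl | hs0
    · simp only [mul_zero, Nat.zero_div, zero_add, Nat.choose_succ_self, CharP.cast_eq_zero,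
        zero_mul]
      positivity
    calc (n.choose s : ℝ) * (s * s).choose (11 * s / 10 + 1) * p ^ (11 * s / 10 + 1)
        ≤ (27 / (n * p)) ^ s :=
          choose_mul_choose_mul_pow_le hp (by linarith) (Finset.mem_filter.1 hs).2 (by omega)
      _ = (2 * (27 / (n * p))) ^ s * (1 / 2) ^ s := by rw [← mul_pow]; ring
      _ ≤ 2 * (27 / (n * p)) * (1 / 2) ^ s := by
          gcongr
          exact pow_le_of_le_one (by positivity) hc hs0.ne'
  calc _ ≤ ∑ s ∈ sparseSizes n p,
        2 * (27 / (n * p)) * (1 / 2) ^ s := Finset.sum_le_sum hterm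
    _ ≤ ∑ s ∈ Finset.range (n + 1), 2 * (27 / (n * p)) * (1 / 2 : ℝ) ^ s :=
        Finset.sum_le_sum_of_subset_of_nonneg (Finset.filter_subset _ _) fun _ _ _ => by positivity
    _ ≤ 2 * (27 / (n * p)) * 2 := by
        rw [← Finset.mul_sum]
        gcongr
        exact sum_geometric_two_le _
    _ = 108 / (n * p) := by ring

lemma mul_pow_le_of_le_zpow_neg_mul {a b x : ℝ} {k : ℕ} (hb : 0 ≤ b) (hx : 0 ≤ x)
    (h : a ≤ x ^ (-k : ℤ) * b) : a * x ^ k ≤ b := by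
  rcases hx.eq_or_lt with rfl | hx
  · rcases k.eq_zero_or_pos with rfl | hk
    · simpa using h
    · simpa [zero_pow hk.ne'] using hb
  rwa [zpow_neg, zpow_natCast, inv_mul_eq_div, le_div_iff₀ (by positivity)] at h

lemma smallSetsSparse_compl_subset {n : ℕ} {p : ℝ} (hp : 0 ≤ p) :
    (smallSetsSparse n p)ᶜ
      ⊆ ⋃ s ∈ sparseSizes n p,
          {A | ∃ S : Finset (Fin n), S.card = s ∧ 11 * s / 10 + 1 ≤ edgesWithin A S} := by
  intro A hA
  simp only [Set.mem_compl_iff, smallSetsSparse, Set.mem_ofPred_eq, not_forall, not_le, exists_prop] at hA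
  obtain ⟨S, hS, hE⟩ := hA
  obtain ⟨S, rfl⟩ : ∃ S' : Finset (Fin n), ↑S' = S := ⟨S.toFinite.toFinset, S.toFinite.coe_toFinset⟩
  rw [Set.ncard_coe_finset] at hS hE
  have hSn : S.card ≤ n := by simpa using S.card_le_univ
  have hE' : 11 * S.card < 10 * edgesWithin A S := by
    exact_mod_cast (show (11 * S.card : ℝ) < 10 * edgesWithin A S by linarith)
  simp only [Set.mem_iUnion, sparseSizes, Finset.mem_filter, Finset.mem_range, exists_prop]
  exact ⟨S.card, ⟨by omega, mul_pow_le_of_le_zpow_neg_mul n.cast_nonneg (by positivity) hS⟩,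
    S, rfl, by omega⟩

lemma erMeasure_smallSetsSparse_compl_le {n : ℕ} {p : ℝ} (h0 : 0 ≤ p) (h1 : p ≤ 1) :
    erMeasure n p (smallSetsSparse n p)ᶜ
      ≤ ENNReal.ofReal (∑ s ∈ sparseSizes n p,
          (n.choose s : ℝ) * (s * s).choose (11 * s / 10 + 1) * p ^ (11 * s / 10 + 1)) := by
  rw [ENNReal.ofReal_sum_of_nonneg fun s _ => by positivity]
  exact (measure_mono (smallSetsSparse_compl_subset h0)).trans <|
    (measure_biUnion_finset_le _ _).trans <| Finset.sum_le_sum fun s _ => erMeasure_exists_card_eq_le_edgesWithin_le h0 h1 _ _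

/-- If `n·pₙ → ∞` then whp every vertex set `S` of `𝔾(n,pₙ)` with
`|S| ≤ (n·pₙ)^{−21}·n` spans at most `1.1·|S|` edges. -/
theorem whp_small_sets_very_sparse (p : ℕ → ℝ) (hp : ∀ n, p n ∈ Set.Icc (0 : ℝ) 1)
    (hgrow : Tendsto (fun n : ℕ => (n : ℝ) * p n) atTop atTop) :
    Tendsto (fun n => erMeasure n (p n)
        {A | ∀ S : Set (Fin n), (S.ncard : ℝ) ≤ ((n : ℝ) * p n) ^ (-21 : ℤ) * n →
          ((edgesWithin A S : ℝ)) ≤ 1.1 * S.ncard})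
      atTop (nhds 1) := by
  have := fun n => isProbabilityMeasure_erMeasure (n := n) (hp n).1 (hp n).2
  refine tendsto_measure_of_tendsto_measure_compl (s := fun n => smallSetsSparse n (p n)) ?_
  have hbound : Tendsto (fun n : ℕ => ENNReal.ofReal (108 / (n * p n))) atTop (𝓝 0) := by
    simpa [div_eq_mul_inv] using ENNReal.tendsto_ofReal (hgrow.inv_tendsto_atTop.const_mul 108)
  refine tendsto_of_tendsto_of_tendsto_of_le_of_le' tendsto_const_nhds hbound
    (Eventually.of_forall fun n => zero_le) ?_
  filter_upwards [hgrow.eventually_ge_atTop 54] with n hn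
  exact (erMeasure_smallSetsSparse_compl_le (hp n).1 (hp n).2).trans
    (ENNReal.ofReal_le_ofReal (sum_choose_mul_choose_mul_pow_le (hp n).1 hn))
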